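/- Let A be a commutative integral domain with multiplicative identity e that is an associative algebra over ℝ. Define, for a bilinear map Ψ, the 4-linear map J(Ψ)(x₁,x₂,x₃,x₄) = Σ_σ x₁·x_{σ(2)}·Ψ(x_{σ(3)},x_{σ(4)}), the sum over the six permutations σ of {2,3,4}. Then J maps ker(d₁) into ker(d₃) and maps d₀(M(A)) into im(d₂), and the induced homomorphism J : H₀^mc(A) → H₂(A) is injective; concretely, if Ψ is bilinear with d₁(Ψ) = 0 and J(Ψ) lies in the image of d₂, then Ψ(a,b) = ab·Ψ(e,e) for all a,b ∈ A, i.e. Ψ = d₀(T) for the multiplier T(x) = x·Ψ(e,e). -/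
import Mathlib


open scoped BigOperators

/-- The coboundary operators `d_n : U_n(A) → U_{n+1}(A)`, acting on raw cochains
(`U_n(A)` is the space of `(n+1)`-linear maps `A^{n+1} → A`):
`d₀(f)(x₁,x₂) = f(x₁x₂)`;
`d₁(Ψ)(x₁,x₂,x₃) = Ψ(x₁x₂,x₃) − Ψ(x₁x₃,x₂)`;
for odd `2n−1` with `n ≥ 2`,
`d_{2n−1}(Φ)(x₁,…,x_{2n+1}) = Φ(x₁x₂,x₃,…,x_{2n},x_{2n+1}) − Φ(x₁x₂,x₃,…,x_{2n+1},x_{2n})`;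
for even `2n` with `n ≥ 1`,
`d_{2n}(Φ)(x₁,…,x_{2n+2}) = Σ_{σ ∈ S_{2n+2}} Φ(x_{σ(1)}x_{σ(2)}, x_{σ(3)}, …, x_{σ(2n+2)})`. -/
def cob (A : Type*) [CommRing A] : (n : ℕ) → ((Fin (n + 1) → A) → A) → (Fin (n + 2) → A) → A
  | 0, f, x => f ![x 0 * x 1]
  | 1, Ψ, x => Ψ ![x 0 * x 1, x 2] - Ψ ![x 0 * x 2, x 1]
  | m + 2, Φ, x =>
    if (m + 2) % 2 = 0 then
      ∑ σ : Equiv.Perm (Fin (m + 4)),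
        Φ (Fin.cons (x (σ ⟨0, by omega⟩) * x (σ ⟨1, by omega⟩))
            fun j : Fin (m + 2) => x (σ j.succ.succ))
    else
      Φ (Fin.cons (x ⟨0, by omega⟩ * x ⟨1, by omega⟩) fun j : Fin (m + 2) => x j.succ.succ) -
      Φ (Fin.cons (x ⟨0, by omega⟩ * x ⟨1, by omega⟩) fun j : Fin (m + 2) =>
          x (Equiv.swap (Fin.last (m + 3)) ((Fin.last (m + 2)).castSucc) j.succ.succ))

/-- A linear map `T : A → A` is a multiplier if `T(ab) = aT(b)` for all `a, b ∈ A`. -/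
def IsMultiplier {A : Type*} [CommRing A] [Algebra ℝ A] (T : A →ₗ[ℝ] A) : Prop :=
  ∀ a b : A, T (a * b) = a * T b

/-- The bilinear map `Ψ` viewed as a raw 2-cochain in `U₁(A)`. -/
def uncurry2 {A : Type*} [CommRing A] [Algebra ℝ A] (Ψ : A →ₗ[ℝ] A →ₗ[ℝ] A) :
    (Fin 2 → A) → A := fun y => Ψ (y 0) (y 1)

/-- `J(Ψ)(x₁,x₂,x₃,x₄) = Σ_σ x₁·x_{σ(2)}·Ψ(x_{σ(3)},x_{σ(4)})`, the sum over the six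
permutations `σ` of `{2,3,4}`. -/
def Jmap {A : Type*} [CommRing A] [Algebra ℝ A] (Ψ : A →ₗ[ℝ] A →ₗ[ℝ] A) :
    (Fin 4 → A) → A := fun x =>
  x 0 * x 1 * Ψ (x 2) (x 3) + x 0 * x 1 * Ψ (x 3) (x 2) +
  x 0 * x 2 * Ψ (x 1) (x 3) + x 0 * x 2 * Ψ (x 3) (x 1) +
  x 0 * x 3 * Ψ (x 1) (x 2) + x 0 * x 3 * Ψ (x 2) (x 1)

set_option maxRecDepth 4000 in
/-- `J` maps `ker(d₁)` into `ker(d₃)`, maps `d₀(M(A))` into `im(d₂)`,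
and the induced homomorphism `J : H₀^mc(A) → H₂(A)` is injective; concretely, if `Ψ` is
bilinear with `d₁(Ψ) = 0` and `J(Ψ)` lies in the image of `d₂` (on trilinear maps), then
`Ψ(a,b) = ab·Ψ(e,e)` for all `a,b ∈ A`. -/
theorem Jmap_ker_im_and_injective (A : Type*) [CommRing A] [IsDomain A] [Algebra ℝ A] :
    (∀ Ψ : A →ₗ[ℝ] A →ₗ[ℝ] A, cob A 1 (uncurry2 Ψ) = 0 → cob A 3 (Jmap Ψ) = 0) ∧
    (∀ Ψ : A →ₗ[ℝ] A →ₗ[ℝ] A,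
      (∃ T : A →ₗ[ℝ] A, IsMultiplier T ∧ ∀ a b : A, Ψ a b = T (a * b)) →
      ∃ Φ : MultilinearMap ℝ (fun _ : Fin 3 => A) A, Jmap Ψ = cob A 2 ⇑Φ) ∧
    (∀ Ψ : A →ₗ[ℝ] A →ₗ[ℝ] A, cob A 1 (uncurry2 Ψ) = 0 →
      (∃ Φ : MultilinearMap ℝ (fun _ : Fin 3 => A) A, Jmap Ψ = cob A 2 ⇑Φ) →
      ∀ a b : A, Ψ a b = a * b * Ψ 1 1) := by
  refine ⟨?_, ?_, ?_⟩
  · -- Part 1: J maps ker d₁ into ker d₃ (in fact J(Ψ) is always a cocycle)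
    intro Ψ _
    funext x
    show cob A (1+2) (Jmap Ψ) x = 0
    have hc0 : ∀ (y:A) (f : Fin 3 → A), (Fin.cons y f : Fin 4 → A) 0 = y := fun _ _ => rfl
    have hc1 : ∀ (y:A) (f : Fin 3 → A), (Fin.cons y f : Fin 4 → A) 1 = f 0 := fun _ _ => rfl
    have hc2 : ∀ (y:A) (f : Fin 3 → A), (Fin.cons y f : Fin 4 → A) 2 = f 1 := fun _ _ => rfl
    have hc3 : ∀ (y:A) (f : Fin 3 → A), (Fin.cons y f : Fin 4 → A) 3 = f 2 := fun _ _ => rfl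
    simp only [cob, Jmap]
    norm_num [hc0, hc1, hc2, hc3, Equiv.swap_apply_def, Fin.ext_iff, Fin.last,
      show ((0:Fin 3).succ.succ : Fin 5) = ⟨2, by omega⟩ from rfl,
      show ((1:Fin 3).succ.succ : Fin 5) = ⟨3, by omega⟩ from rfl,
      show ((2:Fin 3).succ.succ : Fin 5) = ⟨4, by omega⟩ from rfl,
      show (Fin.succ (2:Fin 4) : Fin 5) = ⟨3, by omega⟩ from rfl,
      show ((0:Fin 5)) = ⟨0, by omega⟩ from rfl,
      show ((1:Fin 5)) = ⟨1, by omega⟩ from rfl,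
      show ((2:Fin 5)) = ⟨2, by omega⟩ from rfl]
    ring
  · -- Part 2: J maps d₀(M(A)) into im d₂
    rintro Ψ ⟨T, hT, hΨ⟩
    have hΨ' : ∀ a b : A, Ψ a b = a * b * T 1 := fun a b => by
      have h1 := hT (a*b) 1
      have h2 := hΨ a b
      rw [h2]; rw [mul_one] at h1; rw [h1, mul_assoc]
    refine ⟨(4:ℝ)⁻¹ • ((LinearMap.mulRight ℝ (T 1)).compMultilinearMap
        (MultilinearMap.mkPiAlgebra ℝ (Fin 3) A)), ?_⟩
    funext x
    show Jmap Ψ x = cob A (0+2) _ x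
    have hc0 : ∀ (y:A) (f : Fin 2 → A), (Fin.cons y f : Fin 3 → A) 0 = y := fun _ _ => rfl
    have hc1 : ∀ (y:A) (f : Fin 2 → A), (Fin.cons y f : Fin 3 → A) 1 = f 0 := fun _ _ => rfl
    have hc2 : ∀ (y:A) (f : Fin 2 → A), (Fin.cons y f : Fin 3 → A) 2 = f 1 := fun _ _ => rfl
    have key : ∀ σ : Equiv.Perm (Fin 4),
        x (σ 0) * x (σ 1) * x (σ 2) * x (σ 3) = x 0 * x 1 * x 2 * x 3 := by
      intro σ
      have := Equiv.prod_comp σ x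
      simpa [Fin.prod_univ_four] using this
    simp only [cob, Jmap]
    rw [if_pos (by norm_num)]
    simp only [MultilinearMap.smul_apply, LinearMap.compMultilinearMap_apply,
      MultilinearMap.mkPiAlgebra_apply, LinearMap.mulRight_apply]
    simp only [Fin.prod_univ_three, hc0, hc1, hc2,
      show ((0:Fin 2).succ.succ : Fin 4) = 2 from rfl,
      show ((1:Fin 2).succ.succ : Fin 4) = 3 from rfl,
      show (⟨0, by omega⟩ : Fin 4) = 0 from rfl,
      show (⟨1, by omega⟩ : Fin 4) = 1 from rfl, key,
      Finset.sum_const, Fintype.card_perm, hΨ']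
    rw [show (Finset.univ : Finset (Equiv.Perm (Fin 4))).card = 24 by
      norm_num [Finset.card_univ, Fintype.card_perm, Nat.factorial]]
    rw [show (24 : ℕ) • ((4:ℝ)⁻¹ • (x 0 * x 1 * x 2 * x 3 * T 1)) =
      ((24 * (4:ℝ)⁻¹)) • (x 0 * x 1 * x 2 * x 3 * T 1) by
        rw [← Nat.cast_smul_eq_nsmul ℝ, smul_smul]; norm_num]
    rw [show ((24:ℝ) * 4⁻¹) = 6 by norm_num]
    rw [show ((6:ℝ) • (x 0 * x 1 * x 2 * x 3 * T 1)) = 6 * (x 0 * x 1 * x 2 * x 3 * T 1) by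
      rw [Algebra.smul_def, map_ofNat]]
    ring
  · -- Part 3: injectivity of the induced map on cohomology
    intro Ψ hd1 hJ a b
    have hkey : ∀ u v w : A, Ψ (u * v) w = Ψ (u * w) v := by
      intro u v w
      have := congrFun hd1 ![u, v, w]
      simpa [cob, uncurry2, sub_eq_zero] using this
    have hsym : ∀ u v : A, Ψ u v = Ψ v u := by
      intro u v
      have := hkey 1 u v
      simpa using this
    have hperm : ∀ (Φ : MultilinearMap ℝ (fun _ : Fin 3 => A) A) (x : Fin 4 → A)
        (τ : Equiv.Perm (Fin 4)), cob A 2 ⇑Φ (x ∘ τ) = cob A 2 ⇑Φ x := by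
      intro Φ x τ
      show cob A (0+2) _ _ = cob A (0+2) _ _
      simp only [cob]
      rw [if_pos (by norm_num), if_pos (by norm_num)]
      refine Fintype.sum_equiv (Equiv.mulLeft τ) _ _ ?_
      intro σ
      simp [Function.comp, Equiv.Perm.mul_apply]
    obtain ⟨Φ, hΦ⟩ := hJ
    have h1 : ∀ c : A, Ψ c 1 = c * Ψ 1 1 := by
      intro c
      have hx : (![(1:A), c, 1, 1] ∘ (Equiv.swap 0 1)) = ![c, 1, 1, 1] := by
        funext i
        fin_cases i <;> simp [Equiv.swap_apply_def]
      have e1 : Jmap Ψ ![c, 1, 1, 1] = Jmap Ψ ![1, c, 1, 1] := by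
        rw [hΦ, ← hx, hperm]
      simp only [Jmap, Matrix.cons_val_zero, Matrix.cons_val_one, Matrix.head_cons,
        Matrix.cons_val_two, Matrix.tail_cons, Matrix.cons_val_three] at e1
      simp only [one_mul, mul_one, map_one, Module.End.one_apply] at e1
      have e2 : (4 : A) * (c * Ψ 1 1) = (4 : A) * (Ψ c 1) := by
        rw [hsym 1 c] at e1
        ring_nf at e1 ⊢
        linear_combination e1
      have h4 : (4 : A) ≠ 0 := by
        have hinj : Function.Injective (algebraMap ℝ A) := (algebraMap ℝ A).injective
        have := charZero_of_injective_algebraMap hinj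
        norm_num
      exact (mul_left_cancel₀ h4 e2).symm
    calc Ψ a b = Ψ (a * b) 1 := by have := hkey a b 1; simpa using this.symm
      _ = a * b * Ψ 1 1 := h1 (a * b)
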